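/- Let z : ℝ → ℂ^N be a differentiable solution of the damped and driven dNLS. Then the total energy E(t) = Σ_{j=1}^N ½|z_j(t)|² satisfies d/dt E(t) = β|z_1(t)|² − γ|z_N(t)|² for every t ∈ ℝ. In particular, if β = 0 and γ ≥ 0 then the total energy is non-increasing. -/

import Mathlib

/-- The discrete Laplacian on `Fin N → ℂ` with the boundary conventions
`(Δz)_1 = z_2 − z_1`, `(Δz)_N = z_{N−1} − z_N`. -/
def lapC {N : ℕ} (z : Fin N → ℂ) (j : Fin N) : ℂ :=
  (if h : j.val + 1 < N then z ⟨j.val + 1, h⟩ else z j)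
  + (if 0 < j.val then z ⟨j.val - 1, lt_of_le_of_lt (Nat.sub_le _ _) j.isLt⟩ else z j)
  - 2 * z j

/-- The right-hand side of the damped and driven dNLS:
`V(z)_j = i(−ε(Δz)_j + |z_j|² z_j) + β δ_{j,1} z_1 − γ δ_{j,N} z_N`. -/
def Vfield (N : ℕ) (ε β γ : ℝ) (z : Fin N → ℂ) : Fin N → ℂ := fun j =>
  Complex.I * (-(ε : ℂ) * lapC z j + (Complex.normSq (z j) : ℂ) * z j)
    + (if j.val = 0 then (β : ℂ) * z j else 0)
    - (if j.val = N - 1 then (γ : ℂ) * z j else 0)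

/-!
Along a solution, `d/dt ½|z_j|² = Re(conj z_j · ż_j)`. The conservative part `i(−εΔz + |z|²z)`
contributes `ε Im(conj z_j (Δz)_j)` at each site (the cubic term gives `Re(i|z_j|⁴) = 0`), and
these sum to zero because `Δ` is a real symmetric matrix: each edge `(k, k+1)` contributes
`Im(conj z_k z_{k+1}) + Im(conj z_{k+1} z_k) = 0`. Only the boundary gain and loss survive.
-/

open Complex ComplexConjugate Finset

lemma im_conj_mul_add_im_conj_mul_swap (a b : ℂ) :
    (conj a * b).im + (conj b * a).im = 0 := by
  simp only [mul_im, conj_re, conj_im]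
  ring

theorem sum_im_conj_mul_lapC {N : ℕ} (w : Fin N → ℂ) :
    ∑ j, (conj (w j) * lapC w j).im = 0 := by
  cases N with
  | zero => simp
  | succ n =>
    have hsplit : ∀ j : Fin (n + 1), (conj (w j) * lapC w j).im
        = (if h : (j : ℕ) + 1 < n + 1 then (conj (w j) * w ⟨j + 1, h⟩).im else 0)
          + (if 0 < (j : ℕ) then (conj (w j) * w ⟨j - 1, by omega⟩).im else 0) := by
      intro j
      have hdiag : (conj (w j) * w j).im = 0 := by
        rw [mul_im, conj_re, conj_im]
        ring
      have hdiag₂ : (conj (w j) * (2 * w j)).im = 0 := by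
        rw [mul_left_comm, mul_im, hdiag]
        norm_num
      simp only [lapC]
      split_ifs <;> simp only [mul_sub, mul_add, sub_im, add_im, hdiag, hdiag₂] <;> ring
    have hforward : ∑ j : Fin (n + 1),
        (if h : (j : ℕ) + 1 < n + 1 then (conj (w j) * w ⟨j + 1, h⟩).im else 0)
          = ∑ i : Fin n, (conj (w i.castSucc) * w i.succ).im := by
      rw [Fin.sum_univ_castSucc]
      simp only [Fin.val_castSucc, Fin.val_last, lt_irrefl, dite_false, add_zero,
        add_lt_add_iff_right]
      exact sum_congr rfl fun i _ => dif_pos i.isLt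
    have hbackward : ∑ j : Fin (n + 1),
        (if 0 < (j : ℕ) then (conj (w j) * w ⟨j - 1, by omega⟩).im else 0)
          = ∑ i : Fin n, (conj (w i.succ) * w i.castSucc).im := by
      rw [Fin.sum_univ_succ]
      simp only [Fin.val_zero, lt_irrefl, if_false, zero_add, Fin.val_succ, Nat.succ_pos,
        if_true]
      rfl
    rw [sum_congr rfl fun j _ => hsplit j, sum_add_distrib, hforward, hbackward,
      ← sum_add_distrib]
    exact sum_eq_zero fun i _ => im_conj_mul_add_im_conj_mul_swap _ _

lemma HasDerivAt.half_normSq {f : ℝ → ℂ} {f' : ℂ} {t : ℝ} (hf : HasDerivAt f f' t) :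
    HasDerivAt (fun s => (1 / 2 : ℝ) * normSq (f s)) (conj (f t) * f').re t := by
  have h := hf.norm_sq.const_mul (1 / 2 : ℝ)
  rw [Complex.inner, ← mul_assoc, one_div, inv_mul_cancel₀ two_ne_zero, one_mul, mul_comm f'] at h
  simpa only [normSq_eq_norm_sq, one_div] using h

lemma re_conj_mul_Vfield {N : ℕ} (ε β γ : ℝ) (w : Fin N → ℂ) (j : Fin N) :
    (conj (w j) * Vfield N ε β γ w j).re
      = ε * (conj (w j) * lapC w j).im
        + (if (j : ℕ) = 0 then β * normSq (w j) else 0)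
        - (if (j : ℕ) = N - 1 then γ * normSq (w j) else 0) := by
  simp only [Vfield]
  split_ifs <;> simp only [mul_add, mul_sub, add_re, sub_re, mul_re, mul_im, conj_re, conj_im,
    I_re, I_im, ofReal_re, ofReal_im, neg_re, neg_im, normSq_apply, mul_zero, sub_zero,
    zero_re] <;> ring

theorem sum_re_conj_mul_Vfield {N : ℕ} (hN : 0 < N) (ε β γ : ℝ) (w : Fin N → ℂ) :
    ∑ j, (conj (w j) * Vfield N ε β γ w j).re
      = β * normSq (w ⟨0, hN⟩) - γ * normSq (w ⟨N - 1, by omega⟩) := by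
  have hdelta : ∀ (k : Fin N) (c : ℝ),
      ∑ j : Fin N, (if (j : ℕ) = k then c * normSq (w j) else 0) = c * normSq (w k) := by
    intro k c
    simp only [← Fin.ext_iff, sum_ite_eq', mem_univ, if_true]
  simp only [re_conj_mul_Vfield, sum_sub_distrib, sum_add_distrib, ← mul_sum,
    sum_im_conj_mul_lapC, mul_zero, zero_add]
  rw [hdelta ⟨0, hN⟩, hdelta ⟨N - 1, by omega⟩]

/-- The total energy `E(t) = Σ_j ½|z_j(t)|²` of a solution of the damped and
driven dNLS satisfies `E′ = β|z_1|² − γ|z_N|²`; in particular it is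
non-increasing when `β = 0` and `γ ≥ 0`. -/
theorem stmt_10 (N : ℕ) (hN : 2 ≤ N) (ε β γ : ℝ) (z : ℝ → Fin N → ℂ)
    (hz : ∀ t : ℝ, ∀ j : Fin N,
      HasDerivAt (fun s => z s j) (Vfield N ε β γ (z t) j) t) :
    (∀ t : ℝ,
      HasDerivAt (fun s => ∑ j : Fin N, (1 / 2 : ℝ) * Complex.normSq (z s j))
        (β * Complex.normSq (z t ⟨0, by omega⟩)
          - γ * Complex.normSq (z t ⟨N - 1, by omega⟩)) t) ∧
    (β = 0 → 0 ≤ γ →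
      Antitone (fun t => ∑ j : Fin N, (1 / 2 : ℝ) * Complex.normSq (z t j))) := by
  have hE : ∀ t : ℝ,
      HasDerivAt (fun s => ∑ j : Fin N, (1 / 2 : ℝ) * Complex.normSq (z s j))
        (β * Complex.normSq (z t ⟨0, by omega⟩)
          - γ * Complex.normSq (z t ⟨N - 1, by omega⟩)) t := fun t => by
    rw [← sum_re_conj_mul_Vfield (by omega)]
    exact HasDerivAt.fun_sum fun j _ => (hz t j).half_normSq
  refine ⟨hE, fun hβ hγ => antitone_of_hasDerivAt_nonpos hE fun t => ?_⟩
  rw [Pi.zero_apply, hβ, zero_mul, zero_sub, neg_nonpos]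
  exact mul_nonneg hγ (normSq_nonneg _)
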